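/- Preimage interval lemma: if f is a quasi-isometry from α to β with constants A, B, then there exist constants A' ≥ 1 and B' ≥ 0 such that for all x ≤ y in ℕ with f⁻¹([x,y]) nonempty, (1/A')·(y−x) − B' ≤ max f⁻¹([x,y]) − min f⁻¹([x,y]) ≤ A'·(y−x) + B'. -/

import Mathlib

def IsQI {Γ : Type*} (α β : ℕ → Γ) (f : ℕ → ℕ) (A B : ℝ) : Prop :=
  1 ≤ A ∧ 0 ≤ B ∧ (∀ n, α n = β (f n)) ∧
  (∀ x y : ℕ, (1 / A) * |(x : ℝ) - (y : ℝ)| - B ≤ |(f x : ℝ) - (f y : ℝ)| ∧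
      |(f x : ℝ) - (f y : ℝ)| ≤ A * |(x : ℝ) - (y : ℝ)| + B) ∧
  (∀ m : ℕ, ∃ x : ℕ, |(m : ℝ) - (f x : ℝ)| ≤ A)

/-- `α ≤_QI β`: there is a quasi-isometry from `α` to `β`. -/
def QI {Γ : Type*} (α β : ℕ → Γ) : Prop := ∃ f A B, IsQI α β f A B

/-!
Points of `S = f⁻¹[x, y]` have images at distance at most `y - x`, so the lower quasi-isometry
bound makes `S` finite of diameter at most `A (y - x + B)`. Conversely, coarse surjectivity
aimed at `x + ⌈A⌉` and at `y - ⌈A⌉` produces two points of `S` whose images are `y - x - 4⌈A⌉`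
apart, and the upper quasi-isometry bound turns this into a lower bound on the diameter of `S`.
-/

namespace Nat

theorem finite_and_sSup_sub_sInf_le {S : Set ℕ} {D : ℝ} (hne : S.Nonempty)
    (hD : ∀ u ∈ S, ∀ v ∈ S, (u : ℝ) - v ≤ D) :
    S.Finite ∧ ((sSup S : ℕ) : ℝ) - (sInf S : ℕ) ≤ D := by
  obtain ⟨p, hp⟩ := hne
  have hbdd : BddAbove S := by
    refine ⟨p + ⌈D⌉₊, fun u hu => ?_⟩
    have : (u : ℝ) ≤ p + ⌈D⌉₊ := by linarith [hD u hu p hp, Nat.le_ceil D]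
    exact_mod_cast this
  exact ⟨Set.finite_iff_bddAbove.2 hbdd,
    hD _ (Nat.sSup_mem ⟨p, hp⟩ hbdd) _ (Nat.sInf_mem ⟨p, hp⟩)⟩

theorem abs_sub_le_sSup_sub_sInf {S : Set ℕ} (hS : BddAbove S) {u v : ℕ} (hu : u ∈ S)
    (hv : v ∈ S) : |(u : ℝ) - v| ≤ ((sSup S : ℕ) : ℝ) - (sInf S : ℕ) := by
  have hu₁ : ((sInf S : ℕ) : ℝ) ≤ u := by exact_mod_cast Nat.sInf_le hu
  have hu₂ : (u : ℝ) ≤ (sSup S : ℕ) := by exact_mod_cast le_csSup hS hu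
  have hv₁ : ((sInf S : ℕ) : ℝ) ≤ v := by exact_mod_cast Nat.sInf_le hv
  have hv₂ : (v : ℝ) ≤ (sSup S : ℕ) := by exact_mod_cast le_csSup hS hv
  rw [abs_sub_le_iff]
  constructor <;> linarith

end Nat

namespace IsQI

variable {Γ : Type*} {α β : ℕ → Γ} {f : ℕ → ℕ} {A B : ℝ}

theorem sub_le_of_apply_mem_Icc (h : IsQI α β f A B) {x y u v : ℕ}
    (hu : f u ∈ Set.Icc x y) (hv : f v ∈ Set.Icc x y) :
    (u : ℝ) - v ≤ A * ((y - x) + B) := by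
  obtain ⟨hA, -, -, hQI, -⟩ := h
  have hfu : (x : ℝ) ≤ f u ∧ (f u : ℝ) ≤ y := by exact_mod_cast hu
  have hfv : (x : ℝ) ≤ f v ∧ (f v : ℝ) ≤ y := by exact_mod_cast hv
  have himage : |(f u : ℝ) - f v| ≤ y - x := by
    rw [abs_sub_le_iff]
    constructor <;> linarith
  have hdist : A⁻¹ * |(u : ℝ) - v| ≤ (y - x) + B := by
    linarith [one_div A ▸ (hQI u v).1]
  rw [inv_mul_le_iff₀ (by linarith)] at hdist
  exact (le_abs_self _).trans hdist

theorem exists_apply_mem_Icc (h : IsQI α β f A B) (m : ℕ) :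
    ∃ w, f w ∈ Set.Icc (m - ⌈A⌉₊) (m + ⌈A⌉₊) := by
  obtain ⟨-, -, -, -, hsurj⟩ := h
  obtain ⟨w, hw⟩ := hsurj m
  obtain ⟨hlo, hhi⟩ := abs_le.1 hw
  have hA := Nat.le_ceil A
  have hlo' : (m : ℝ) ≤ f w + ⌈A⌉₊ := by linarith
  have hhi' : (f w : ℝ) ≤ m + ⌈A⌉₊ := by linarith
  exact ⟨w, Nat.sub_le_of_le_add (by exact_mod_cast hlo'), by exact_mod_cast hhi'⟩

theorem sub_sub_le_mul_sSup_sub_sInf (h : IsQI α β f A B) {x y : ℕ}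
    (hxy : x + 2 * ⌈A⌉₊ ≤ y) (hS : BddAbove (f ⁻¹' Set.Icc x y)) :
    ((y : ℝ) - x) - 4 * ⌈A⌉₊ - B ≤
      A * (((sSup (f ⁻¹' Set.Icc x y) : ℕ) : ℝ) - (sInf (f ⁻¹' Set.Icc x y) : ℕ)) := by
  obtain ⟨u, hu⟩ := h.exists_apply_mem_Icc (x + ⌈A⌉₊)
  obtain ⟨v, hv⟩ := h.exists_apply_mem_Icc (y - ⌈A⌉₊)
  set a := ⌈A⌉₊
  simp only [Set.mem_Icc] at hu hv
  have hu' : x ≤ f u ∧ f u ≤ x + 2 * a := by omega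
  have hv' : y - 2 * a ≤ f v ∧ f v ≤ y := by omega
  have hgap : ((y : ℝ) - x) - 4 * a ≤ (f v : ℝ) - f u := by
    have hv₁ : ((y - 2 * a : ℕ) : ℝ) ≤ f v := by exact_mod_cast hv'.1
    have hu₂ : (f u : ℝ) ≤ x + 2 * a := by exact_mod_cast hu'.2
    rw [Nat.cast_sub (by omega), Nat.cast_mul, Nat.cast_ofNat] at hv₁
    linarith
  have hdiam := Nat.abs_sub_le_sSup_sub_sInf hS (u := v) (v := u) ⟨by omega, hv'.2⟩
    ⟨hu'.1, by omega⟩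
  obtain ⟨hA, -, -, hQI, -⟩ := h
  nlinarith [le_abs_self ((f v : ℝ) - f u), (hQI v u).2]

end IsQI

theorem preimage_interval_lemma {Γ : Type*} (α β : ℕ → Γ) (f : ℕ → ℕ) (A B : ℝ)
    (h : IsQI α β f A B) :
    ∃ A' B' : ℝ, 1 ≤ A' ∧ 0 ≤ B' ∧ ∀ x y : ℕ, x ≤ y →
      (f ⁻¹' Set.Icc x y).Nonempty →
      (f ⁻¹' Set.Icc x y).Finite ∧
      (1 / A') * ((y : ℝ) - (x : ℝ)) - B' ≤
        (Nat.cast (sSup (f ⁻¹' Set.Icc x y)) : ℝ) - Nat.cast (sInf (f ⁻¹' Set.Icc x y)) ∧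
      (Nat.cast (sSup (f ⁻¹' Set.Icc x y)) : ℝ) - Nat.cast (sInf (f ⁻¹' Set.Icc x y)) ≤
        A' * ((y : ℝ) - (x : ℝ)) + B' := by
  have hA : 1 ≤ A := h.1
  have hB : 0 ≤ B := h.2.1
  refine ⟨A, A * B + B + 4 * ⌈A⌉₊, hA, by positivity, fun x y hxy hne => ?_⟩
  obtain ⟨hfin, hupper⟩ := Nat.finite_and_sSup_sub_sInf_le (D := A * ((y - x) + B)) hne
    fun u hu v hv => h.sub_le_of_apply_mem_Icc hu hv
  refine ⟨hfin, ?_, by linarith⟩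
  have hxy' : (x : ℝ) ≤ y := by exact_mod_cast hxy
  have hscale : 1 / A * ((y : ℝ) - x) ≤ y - x :=
    mul_le_of_le_one_left (by linarith) ((div_le_one (by linarith)).2 hA)
  rcases lt_or_ge y (x + 2 * ⌈A⌉₊) with hsmall | hlarge
  · have hsmall' : (y : ℝ) < x + 2 * ⌈A⌉₊ := by exact_mod_cast hsmall
    have hdiam := (abs_nonneg _).trans
      (Nat.abs_sub_le_sSup_sub_sInf hfin.bddAbove hne.some_mem hne.some_mem)
    linarith [mul_nonneg (by linarith : 0 ≤ A) hB]
  · have hlower := h.sub_sub_le_mul_sSup_sub_sInf hlarge hfin.bddAbove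
    have hconst : A * B + B + 4 * ⌈A⌉₊ ≤ A * (A * B + B + 4 * ⌈A⌉₊) :=
      le_mul_of_one_le_left (by positivity) hA
    rw [one_div, sub_le_iff_le_add, inv_mul_le_iff₀ (by linarith), mul_add]
    linarith [mul_nonneg (by linarith : 0 ≤ A) hB]
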